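/- (Deterministic comparison, non-strict version.) Let b, b̄ : [0,T] × ℝⁿ → ℝⁿ be continuous, bounded, and Lipschitz in the spatial variable with constant K, and assume: for every t, every i, and all x, y with x_i = y_i and x_j ≤ y_j (j ≠ i), one has b_i(t, x) ≤ b̄_i(t, y). If x(·), y(·) solve x′ = b(t, x), y′ = b̄(t, y) with x(0) ≤ y(0) componentwise, then x(t) ≤ y(t) componentwise for all t ∈ [0,T]. -/

import Mathlib

open Set Filter Topology

/-- Deterministic comparison theorem (non-strict Kamke condition, two bounded drifts):
if `b_i(t,x) ≤ b̄_i(t,y)` whenever `x_i = y_i` and `x_j ≤ y_j` for `j ≠ i`,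
then ordered initial data yield componentwise ordered solutions on `[0,T]`. -/
theorem deterministic_comparison_nonstrict
    {n : ℕ} (T : ℝ) (hT : 0 < T) (K : NNReal)
    (b bbar : ℝ → (Fin n → ℝ) → (Fin n → ℝ))
    (hbcont : Continuous (Function.uncurry b))
    (hbbarcont : Continuous (Function.uncurry bbar))
    (hbbdd : ∃ M : ℝ, ∀ t ∈ Set.Icc (0:ℝ) T, ∀ x, ‖b t x‖ ≤ M)
    (hbbarbdd : ∃ M : ℝ, ∀ t ∈ Set.Icc (0:ℝ) T, ∀ x, ‖bbar t x‖ ≤ M)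
    (hblip : ∀ t ∈ Set.Icc (0:ℝ) T, LipschitzWith K (b t))
    (hbbarlip : ∀ t ∈ Set.Icc (0:ℝ) T, LipschitzWith K (bbar t))
    (hkamke : ∀ t ∈ Set.Icc (0:ℝ) T, ∀ i : Fin n, ∀ x y : Fin n → ℝ,
      x i = y i → (∀ j : Fin n, j ≠ i → x j ≤ y j) → b t x i ≤ bbar t y i)
    (x y : ℝ → (Fin n → ℝ))
    (hx : ∀ t ∈ Set.Icc (0:ℝ) T, HasDerivAt x (b t (x t)) t)
    (hy : ∀ t ∈ Set.Icc (0:ℝ) T, HasDerivAt y (bbar t (y t)) t)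
    (h0 : ∀ k : Fin n, x 0 k ≤ y 0 k) :
    ∀ t ∈ Set.Icc (0:ℝ) T, ∀ k : Fin n, x t k ≤ y t k := by
  classical
  -- `u i` for `i = some j` is the difference of the `j`-th components; `u none = 0`.
  set u : Option (Fin n) → ℝ → ℝ :=
    fun i s => Option.elim i 0 (fun j => x s j - y s j) with hu
  set d : Option (Fin n) → ℝ → ℝ :=
    fun i s => Option.elim i 0 (fun j => b s (x s) j - bbar s (y s) j) with hd
  have hune : (Finset.univ : Finset (Option (Fin n))).Nonempty := ⟨none, Finset.mem_univ _⟩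
  set g : ℝ → ℝ := fun s => Finset.univ.sup' hune (fun i => u i s) with hgdef
  have hgle : ∀ s i, u i s ≤ g s := by
    intro s i
    rw [hgdef]
    exact Finset.le_sup' (fun i => u i s) (Finset.mem_univ i)
  have hg0 : ∀ s, 0 ≤ g s := fun s => hgle s none
  -- each `u i` is differentiable with derivative `d i`
  have hder : ∀ s ∈ Set.Icc (0:ℝ) T, ∀ i, HasDerivAt (u i) (d i s) s := by
    intro s hs i
    cases i with
    | none => simpa [hu, hd] using hasDerivAt_const s (0:ℝ)
    | some j =>
      exact
        (hasDerivAt_pi.mp (hx s hs) j).sub (hasDerivAt_pi.mp (hy s hs) j)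
  -- key estimate at active indices via the Kamke condition and Lipschitz continuity
  have hkey : ∀ s ∈ Set.Icc (0:ℝ) T, ∀ i, u i s = g s → d i s ≤ (K : ℝ) * g s := by
    intro s hs i hact
    cases i with
    | none =>
      have h1 : g s = 0 := by rw [← hact]; simp [hu]
      simp [hd, h1]
    | some j =>
      have hgs : g s = x s j - y s j := by rw [← hact]; simp [hu]
      set yh : Fin n → ℝ := fun l => if l = j then x s j else max (x s l) (y s l) with hyh
      have h1 : b s (x s) j ≤ bbar s yh j := by
        apply hkamke s hs j (x s) yh
        · simp [hyh]
        · intro l hl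
          simp only [hyh, if_neg hl]
          exact le_max_left _ _
      have hdist : dist yh (y s) ≤ g s := by
        rw [dist_pi_le_iff (hg0 s)]
        intro l
        rw [Real.dist_eq]
        by_cases hl : l = j
        · subst hl
          simp only [hyh, if_pos rfl]
          rw [abs_of_nonneg (by linarith [hg0 s, hgs])]
          linarith [hgs]
        · simp only [hyh, if_neg hl]
          rw [abs_of_nonneg (sub_nonneg.mpr (le_max_right _ _))]
          have h2 : x s l - y s l ≤ g s := by simpa [hu] using hgle s (some l)
          have h3 := hg0 s
          rcases le_total (x s l) (y s l) with h | h
          · rw [max_eq_right h]; linarith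
          · rw [max_eq_left h]; linarith
      have h2 : bbar s yh j - bbar s (y s) j ≤ (K : ℝ) * g s := by
        have hl1 := (hbbarlip s hs).dist_le_mul yh (y s)
        have hl2 : dist (bbar s yh j) (bbar s (y s) j) ≤ dist (bbar s yh) (bbar s (y s)) :=
          dist_le_pi_dist _ _ j
        have hl3 : (K : ℝ) * dist yh (y s) ≤ (K : ℝ) * g s :=
          mul_le_mul_of_nonneg_left hdist K.2
        calc bbar s yh j - bbar s (y s) j ≤ |bbar s yh j - bbar s (y s) j| := le_abs_self _
          _ = dist (bbar s yh j) (bbar s (y s) j) := (Real.dist_eq _ _).symm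
          _ ≤ (K : ℝ) * g s := le_trans (hl2.trans hl1) hl3
      have h4 : d (some j) s = b s (x s) j - bbar s (y s) j := by simp [hd]
      rw [h4]; linarith
  -- continuity of g on [0, T]
  have hcont : ContinuousOn g (Set.Icc 0 T) := by
    intro s hs
    apply ContinuousAt.continuousWithinAt
    exact ContinuousAt.finset_sup'_apply hune
      (fun i _ => (hder s hs i).continuousAt)
  -- the liminf-slope hypothesis for Grönwall
  have hf' : ∀ s ∈ Set.Ico (0:ℝ) T, ∀ r, (K : ℝ) * g s < r →
      ∃ᶠ z in 𝓝[>] s, (z - s)⁻¹ * (g z - g s) < r := by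
    intro s hs r hr
    apply Filter.Eventually.frequently
    have hmem : s ∈ Set.Icc (0:ℝ) T := Set.Ico_subset_Icc_self hs
    have hone : ∀ i : Option (Fin n),
        ∀ᶠ z in 𝓝[>] s, (z - s)⁻¹ * (u i z - g s) < r := by
      intro i
      by_cases hact : u i s = g s
      · have hdi : d i s < r := lt_of_le_of_lt (hkey s hmem i hact) hr
        have hslope : Tendsto (slope (u i) s) (𝓝[>] s) (𝓝 (d i s)) :=
          (hasDerivAt_iff_tendsto_slope.mp (hder s hmem i)).mono_left
            (nhdsWithin_mono s (fun z hz => ne_of_gt hz))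
        filter_upwards [hslope.eventually_lt_const hdi] with z hz
        have : slope (u i) s z = (z - s)⁻¹ * (u i z - u i s) := by
          rw [slope_def_field]; ring
        rw [hact] at this
        rw [← this]
        exact hz
      · have hlt : u i s < g s := lt_of_le_of_ne (hgle s i) hact
        have h1 : Tendsto (fun z => (z - s)⁻¹) (𝓝[>] s) atTop := by
          have h2 : Tendsto (fun z => z - s) (𝓝[>] s) (𝓝[>] 0) := by
            apply tendsto_nhdsWithin_of_tendsto_nhds_of_eventually_within
            · have h3 : Tendsto (fun z : ℝ => z - s) (𝓝 s) (𝓝 (s - s)) :=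
                ((continuous_id.sub continuous_const).tendsto s)
              rw [sub_self] at h3
              exact h3.mono_left nhdsWithin_le_nhds
            · filter_upwards [self_mem_nhdsWithin] with z hz
              exact sub_pos.mpr (Set.mem_Ioi.mp hz)
          exact tendsto_inv_nhdsGT_zero.comp h2
        have h2 : Tendsto (fun z => u i z - g s) (𝓝[>] s) (𝓝 (u i s - g s)) := by
          have := ((hder s hmem i).continuousAt).tendsto
          exact (this.mono_left nhdsWithin_le_nhds).sub_const _
        exact (h1.atTop_mul_neg (sub_neg.mpr hlt) h2).eventually_lt_atBot r
    have hall : ∀ᶠ z in 𝓝[>] s, ∀ i : Option (Fin n),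
        (z - s)⁻¹ * (u i z - g s) < r := eventually_all.mpr hone
    filter_upwards [hall, self_mem_nhdsWithin] with z hz hzs
    have hzpos : 0 < z - s := sub_pos.mpr hzs
    have hsup : g z < g s + r * (z - s) := by
      rw [hgdef]
      apply (Finset.sup'_lt_iff hune).mpr
      intro i _
      have h5 := hz i
      rw [inv_mul_eq_div, div_lt_iff₀ hzpos] at h5
      linarith
    rw [inv_mul_eq_div, div_lt_iff₀ hzpos]
    linarith
  -- initial condition
  have hga : g 0 ≤ 0 := by
    apply Finset.sup'_le
    intro i _
    cases i with
    | none => simp [hu]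
    | some j => simpa [hu] using sub_nonpos.mpr (h0 j)
  have hbound : ∀ s ∈ Set.Ico (0:ℝ) T,
      (fun s => (K : ℝ) * g s) s ≤ (K : ℝ) * g s + 0 := by
    intro s hs; simp
  have hmain := le_gronwallBound_of_liminf_deriv_right_le
    (f' := fun s => (K : ℝ) * g s) hcont hf' hga hbound
  intro t ht k
  have hgt := hmain t ht
  rw [sub_zero, gronwallBound_ε0_δ0] at hgt
  have hk : x t k - y t k ≤ g t := by simpa [hu] using hgle t (some k)
  linarith
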